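/- Let r, h > 0 and define A(s) = 4π ∫₀^h (r cosh(sz)/cosh(sh)) · √(1 + (r s sinh(sz)/cosh(sh))²) dz for s ≥ 0. Suppose 0 < s₁ < s₂ satisfy r s₁ = cosh(s₁ h) and r s₂ = cosh(s₂ h), and that every s > 0 with r s = cosh(s h) equals s₁ or s₂. Then A is strictly decreasing on [0, s₁], strictly increasing on [s₁, s₂], and strictly decreasing on [s₂, ∞); in particular A has a local minimum at s₁ (the stable catenoid) and a local maximum at s₂ (the unstable catenoid). -/

import Mathlib

/-!
For `s ≠ 0` the integrand is the `z`-derivative of `G(ρ'(z)) / (2 s²)`, where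
`G(v) = v √(1 + v²) + arsinh v`, so `A(s) = 2π G(u) / s²` with `u = ρ'(h) = r s tanh(s h)`.
Writing `u = sinh t`, one finds `A'(s) = 4π s⁻³ k_{sh}(t)` with
`k_a(t) = a sinh(2t) / sinh(2a) - t`. This `k_a` is strictly convex on `[0, ∞)` and vanishes
at `0` and `a`, so `A'(s)` has the sign of `t - s h`, i.e. of `r s - cosh(s h)`. Finally
`s ↦ cosh(s h) - r s` is strictly convex with zeros `s₁ < s₂`, hence negative exactly on
`(s₁, s₂)`.
-/

open Real Set

theorem strictConvexOn_of_hasDerivAt2_pos {D : Set ℝ} (hD : Convex ℝ D) {f f' f'' : ℝ → ℝ}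
    (hf : ∀ x, HasDerivAt f (f' x) x) (hf' : ∀ x, HasDerivAt f' (f'' x) x)
    (hf'' : ∀ x ∈ interior D, 0 < f'' x) : StrictConvexOn ℝ D f := by
  have hderiv : deriv f = f' := funext fun x => (hf x).deriv
  have hderiv2 : deriv f' = f'' := funext fun x => (hf' x).deriv
  have hcont : Continuous f := continuous_iff_continuousAt.2 fun x => (hf x).continuousAt
  refine strictConvexOn_of_deriv2_pos hD hcont.continuousOn fun x hx => ?_
  simpa [Function.iterate_succ, hderiv, hderiv2] using hf'' x hx

namespace StrictConvexOn

variable {s : Set ℝ} {f : ℝ → ℝ} {a b x : ℝ}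

theorem neg_of_zeros_of_mem_Ioo (hf : StrictConvexOn ℝ s f) (ha : a ∈ s) (hb : b ∈ s)
    (hfa : f a = 0) (hfb : f b = 0) (hx : x ∈ Ioo a b) : f x < 0 := by
  have := hf.secant_strict_mono_aux1 ha hb hx.1 hx.2
  rw [hfa, hfb] at this
  nlinarith [hx.1, hx.2]

theorem pos_of_zeros_of_lt_left (hf : StrictConvexOn ℝ s f) (hx : x ∈ s) (hb : b ∈ s)
    (hfa : f a = 0) (hfb : f b = 0) (hxa : x < a) (hab : a < b) : 0 < f x := by
  have := hf.secant_strict_mono_aux1 hx hb hxa hab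
  rw [hfa, hfb] at this
  nlinarith

theorem pos_of_zeros_of_right_lt (hf : StrictConvexOn ℝ s f) (ha : a ∈ s) (hx : x ∈ s)
    (hfa : f a = 0) (hfb : f b = 0) (hab : a < b) (hbx : b < x) : 0 < f x := by
  have := hf.secant_strict_mono_aux1 ha hx hab hbx
  rw [hfa, hfb] at this
  nlinarith

end StrictConvexOn

theorem strictConvexOn_cosh_mul_sub_mul {h : ℝ} (hh : h ≠ 0) (r : ℝ) :
    StrictConvexOn ℝ univ (fun s => cosh (s * h) - r * s) := by
  refine strictConvexOn_of_hasDerivAt2_pos convex_univ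
    (f' := fun s => h * sinh (s * h) - r) (f'' := fun s => h ^ 2 * cosh (s * h))
    (fun s => ?_) (fun s => ?_) (fun s _ => by positivity)
  · exact ((hasDerivAt_mul_const h).cosh.sub ((hasDerivAt_id' s).const_mul r)).congr_deriv
      (by ring)
  · exact (((hasDerivAt_mul_const h).sinh.const_mul h).sub_const r).congr_deriv (by ring)

theorem strictConvexOn_mul_sinh_two_mul_sub_self {c : ℝ} (hc : 0 < c) :
    StrictConvexOn ℝ (Ici 0) (fun t => c * sinh (2 * t) - t) := by
  refine strictConvexOn_of_hasDerivAt2_pos (convex_Ici 0)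
    (f' := fun t => 2 * c * cosh (2 * t) - 1) (f'' := fun t => 4 * c * sinh (2 * t))
    (fun t => ?_) (fun t => ?_) (fun t ht => ?_)
  · exact (((hasDerivAt_id' t).const_mul 2).sinh.const_mul c |>.sub (hasDerivAt_id' t)).congr_deriv
      (by ring)
  · exact ((((hasDerivAt_id' t).const_mul 2).cosh.const_mul (2 * c)).sub_const 1).congr_deriv
      (by ring)
  · rw [interior_Ici] at ht
    have : 0 < sinh (2 * t) := sinh_pos_iff.2 (by linarith [ht.out])
    positivity

noncomputable def catenoidArea (r h s : ℝ) : ℝ :=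
  4 * π * ∫ z in (0:ℝ)..h, (r * cosh (s * z) / cosh (s * h)) *
    √(1 + (r * s * sinh (s * z) / cosh (s * h)) ^ 2)

/-- `ρ'(h)` for the profile `ρ(z) = r cosh(s z) / cosh(s h)`. -/
noncomputable def catenoidBoundarySlope (r h s : ℝ) : ℝ := r * s * sinh (s * h) / cosh (s * h)

noncomputable def catenoidAreaDerivFactor (a t : ℝ) : ℝ := a * sinh (2 * t) / sinh (2 * a) - t

theorem hasDerivAt_mul_sqrt_one_add_sq_add_arsinh (v : ℝ) :
    HasDerivAt (fun v => v * √(1 + v ^ 2) + arsinh v) (2 * √(1 + v ^ 2)) v := by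
  have hpos : 0 < 1 + v ^ 2 := by positivity
  have hsqrt : HasDerivAt (fun v => √(1 + v ^ 2)) (2 * v / (2 * √(1 + v ^ 2))) v :=
    (((hasDerivAt_pow 2 v).const_add 1).sqrt hpos.ne').congr_deriv (by ring)
  refine (((hasDerivAt_id' v).mul hsqrt).add (hasDerivAt_arsinh v)).congr_deriv ?_
  have hsq : √(1 + v ^ 2) ^ 2 = 1 + v ^ 2 := sq_sqrt hpos.le
  field_simp
  linear_combination -hsq

theorem catenoidArea_eq_of_ne_zero (r h : ℝ) {s : ℝ} (hs : s ≠ 0) :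
    catenoidArea r h s = 2 * π * (catenoidBoundarySlope r h s *
      √(1 + catenoidBoundarySlope r h s ^ 2) + arsinh (catenoidBoundarySlope r h s)) / s ^ 2 := by
  set w : ℝ → ℝ := fun z => r * s * sinh (s * z) / cosh (s * h)
  have hw : ∀ z, HasDerivAt w (s ^ 2 * (r * cosh (s * z) / cosh (s * h))) z := fun z =>
    ((((hasDerivAt_id' z).const_mul s).sinh.const_mul (r * s)).div_const _).congr_deriv
      (by ring)
  have hprim : ∀ z, HasDerivAt (fun z => (w z * √(1 + w z ^ 2) + arsinh (w z)) / (2 * s ^ 2))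
      (r * cosh (s * z) / cosh (s * h) * √(1 + w z ^ 2)) z := fun z =>
    (((hasDerivAt_mul_sqrt_one_add_sq_add_arsinh (w z)).comp z (hw z)).div_const _).congr_deriv
      (by field_simp)
  have hcont : Continuous fun z => r * cosh (s * z) / cosh (s * h) * √(1 + w z ^ 2) := by
    fun_prop
  rw [catenoidArea, intervalIntegral.integral_eq_sub_of_hasDerivAt (fun z _ => hprim z)
    (hcont.intervalIntegrable 0 h)]
  simp only [w, catenoidBoundarySlope, mul_zero, sinh_zero, zero_div, zero_mul, arsinh_zero,
    add_zero, sub_zero]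
  ring

theorem hasDerivAt_catenoidBoundarySlope (r h s : ℝ) :
    HasDerivAt (catenoidBoundarySlope r h)
      (r * sinh (s * h) / cosh (s * h) + r * s * h / cosh (s * h) ^ 2) s := by
  have hcosh : cosh (s * h) ≠ 0 := (cosh_pos _).ne'
  refine ((((hasDerivAt_id' s).const_mul r).mul (hasDerivAt_mul_const h).sinh).div
    (hasDerivAt_mul_const h).cosh hcosh).congr_deriv ?_
  simp only [Pi.mul_apply]
  field_simp
  linear_combination (r * s * h) * cosh_sq_sub_sinh_sq (s * h)

theorem hasDerivAt_catenoidArea (r : ℝ) {h s : ℝ} (hh : h ≠ 0) (hs : s ≠ 0) :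
    HasDerivAt (catenoidArea r h)
      (4 * π / s ^ 3 *
        catenoidAreaDerivFactor (s * h) (arsinh (catenoidBoundarySlope r h s))) s := by
  set u := catenoidBoundarySlope r h
  have hclosed : (fun s => 2 * π * (u s * √(1 + u s ^ 2) + arsinh (u s)) / s ^ 2)
      =ᶠ[nhds s] catenoidArea r h :=
    Filter.eventually_of_mem (isOpen_ne.mem_nhds hs) fun y hy =>
      (catenoidArea_eq_of_ne_zero r h hy).symm
  refine (((((hasDerivAt_mul_sqrt_one_add_sq_add_arsinh (u s)).comp s
    (hasDerivAt_catenoidBoundarySlope r h s)).const_mul (2 * π)).div (hasDerivAt_pow 2 s)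
    (pow_ne_zero 2 hs)).congr_of_eventuallyEq hclosed.symm).congr_deriv ?_
  have hsinh : sinh (s * h) ≠ 0 := sinh_ne_zero.2 (mul_ne_zero hs hh)
  have hcosh : cosh (s * h) ≠ 0 := (cosh_pos _).ne'
  simp only [catenoidAreaDerivFactor, Function.comp, sinh_two_mul, sinh_arsinh, cosh_arsinh, u,
    catenoidBoundarySlope]
  field_simp
  ring

theorem continuous_catenoidArea (r h : ℝ) : Continuous (catenoidArea r h) := by
  have hcosh : ∀ p : ℝ × ℝ, cosh (p.1 * h) ≠ 0 := fun p => (cosh_pos _).ne'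
  have hintegrand : Continuous fun p : ℝ × ℝ => r * cosh (p.1 * p.2) / cosh (p.1 * h) *
      √(1 + (r * p.1 * sinh (p.1 * p.2) / cosh (p.1 * h)) ^ 2) := by
    fun_prop (disch := exact hcosh _)
  exact continuous_const.mul
    (intervalIntegral.continuous_parametric_intervalIntegral_of_continuous' hintegrand 0 h)

theorem strictConvexOn_catenoidAreaDerivFactor {a : ℝ} (ha : 0 < a) :
    StrictConvexOn ℝ (Ici 0) (catenoidAreaDerivFactor a) := by
  have hc : 0 < a / sinh (2 * a) := div_pos ha (sinh_pos_iff.2 (by linarith))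
  convert strictConvexOn_mul_sinh_two_mul_sub_self hc using 1
  funext t
  rw [catenoidAreaDerivFactor, div_mul_eq_mul_div, mul_div_right_comm]

theorem catenoidAreaDerivFactor_zero_right (a : ℝ) : catenoidAreaDerivFactor a 0 = 0 := by
  simp [catenoidAreaDerivFactor]

theorem catenoidAreaDerivFactor_self {a : ℝ} (ha : a ≠ 0) : catenoidAreaDerivFactor a a = 0 := by
  have : sinh (2 * a) ≠ 0 := sinh_ne_zero.2 (mul_ne_zero two_ne_zero ha)
  rw [catenoidAreaDerivFactor, mul_div_assoc, div_self this, mul_one, sub_self]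

theorem catenoidAreaDerivFactor_neg {a t : ℝ} (ht : 0 < t) (hta : t < a) :
    catenoidAreaDerivFactor a t < 0 :=
  have ha : 0 < a := ht.trans hta
  (strictConvexOn_catenoidAreaDerivFactor ha).neg_of_zeros_of_mem_Ioo self_mem_Ici ha.le
    (catenoidAreaDerivFactor_zero_right a) (catenoidAreaDerivFactor_self ha.ne') ⟨ht, hta⟩

theorem catenoidAreaDerivFactor_pos {a t : ℝ} (ha : 0 < a) (hat : a < t) :
    0 < catenoidAreaDerivFactor a t :=
  (strictConvexOn_catenoidAreaDerivFactor ha).pos_of_zeros_of_right_lt self_mem_Ici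
    (ha.trans hat).le (catenoidAreaDerivFactor_zero_right a)
    (catenoidAreaDerivFactor_self ha.ne') ha hat

theorem catenoidBoundarySlope_lt_sinh_iff {r h s : ℝ} (hsh : 0 < s * h) :
    catenoidBoundarySlope r h s < sinh (s * h) ↔ r * s < cosh (s * h) := by
  rw [catenoidBoundarySlope, div_lt_iff₀ (cosh_pos _), mul_comm (sinh _),
    mul_lt_mul_iff_of_pos_right (sinh_pos_iff.2 hsh)]

theorem sinh_lt_catenoidBoundarySlope_iff {r h s : ℝ} (hsh : 0 < s * h) :
    sinh (s * h) < catenoidBoundarySlope r h s ↔ cosh (s * h) < r * s := by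
  rw [catenoidBoundarySlope, lt_div_iff₀ (cosh_pos _), mul_comm (sinh _),
    mul_lt_mul_iff_of_pos_right (sinh_pos_iff.2 hsh)]

theorem deriv_catenoidArea_neg {r h s : ℝ} (hr : 0 < r) (hh : 0 < h) (hs : 0 < s)
    (hlt : r * s < cosh (s * h)) : deriv (catenoidArea r h) s < 0 := by
  rw [(hasDerivAt_catenoidArea r hh.ne' hs.ne').deriv]
  refine mul_neg_of_pos_of_neg (by positivity) (catenoidAreaDerivFactor_neg ?_ ?_)
  · exact arsinh_pos_iff.2 (by unfold catenoidBoundarySlope; positivity)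
  · rw [← arsinh_sinh (s * h), arsinh_lt_arsinh]
    exact (catenoidBoundarySlope_lt_sinh_iff (by positivity)).2 hlt

theorem deriv_catenoidArea_pos {r h s : ℝ} (hh : 0 < h) (hs : 0 < s)
    (hlt : cosh (s * h) < r * s) : 0 < deriv (catenoidArea r h) s := by
  rw [(hasDerivAt_catenoidArea r hh.ne' hs.ne').deriv]
  refine mul_pos (by positivity) (catenoidAreaDerivFactor_pos (by positivity) ?_)
  rw [← arsinh_sinh (s * h), arsinh_lt_arsinh]
  exact (sinh_lt_catenoidBoundarySlope_iff (by positivity)).2 hlt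

theorem strictAntiOn_catenoidArea {r h : ℝ} (hr : 0 < r) (hh : 0 < h) {I : Set ℝ}
    (hI : Convex ℝ I) (hlt : ∀ s ∈ interior I, 0 < s ∧ r * s < cosh (s * h)) :
    StrictAntiOn (catenoidArea r h) I :=
  strictAntiOn_of_deriv_neg hI (continuous_catenoidArea r h).continuousOn fun s hs =>
    deriv_catenoidArea_neg hr hh (hlt s hs).1 (hlt s hs).2

theorem strictMonoOn_catenoidArea {r h : ℝ} (hh : 0 < h) {I : Set ℝ}
    (hI : Convex ℝ I) (hlt : ∀ s ∈ interior I, 0 < s ∧ cosh (s * h) < r * s) :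
    StrictMonoOn (catenoidArea r h) I :=
  strictMonoOn_of_deriv_pos hI (continuous_catenoidArea r h).continuousOn fun s hs =>
    deriv_catenoidArea_pos hh (hlt s hs).1 (hlt s hs).2

theorem area_monotonicity_catenoid_family_general
    (r h : ℝ) (hr : 0 < r) (hh : 0 < h)
    (A : ℝ → ℝ)
    (hA : ∀ s : ℝ, A s = 4 * Real.pi * ∫ z in (0:ℝ)..h,
        (r * Real.cosh (s * z) / Real.cosh (s * h)) *
          Real.sqrt (1 + (r * s * Real.sinh (s * z) / Real.cosh (s * h)) ^ 2))
    (s₁ s₂ : ℝ) (hs₁ : 0 < s₁) (hs₁₂ : s₁ < s₂)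
    (heq₁ : r * s₁ = Real.cosh (s₁ * h)) (heq₂ : r * s₂ = Real.cosh (s₂ * h)) :
    StrictAntiOn A (Set.Icc 0 s₁) ∧ StrictMonoOn A (Set.Icc s₁ s₂) ∧
      StrictAntiOn A (Set.Ici s₂) ∧
      IsLocalMinOn A (Set.Ici 0) s₁ ∧ IsLocalMaxOn A (Set.Ici 0) s₂ := by
  obtain rfl : A = catenoidArea r h := funext hA
  have hψ := strictConvexOn_cosh_mul_sub_mul hh.ne' r
  have hψ₁ : cosh (s₁ * h) - r * s₁ = 0 := by rw [heq₁, sub_self]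
  have hψ₂ : cosh (s₂ * h) - r * s₂ = 0 := by rw [heq₂, sub_self]
  have anti₁ : StrictAntiOn (catenoidArea r h) (Icc 0 s₁) := by
    refine strictAntiOn_catenoidArea hr hh (convex_Icc 0 s₁) fun s hs => ?_
    rw [interior_Icc] at hs
    exact ⟨hs.1, sub_pos.1 <| hψ.pos_of_zeros_of_lt_left (mem_univ s) (mem_univ s₂) hψ₁ hψ₂
      hs.2 hs₁₂⟩
  have mono₂ : StrictMonoOn (catenoidArea r h) (Icc s₁ s₂) := by
    refine strictMonoOn_catenoidArea hh (convex_Icc s₁ s₂) fun s hs => ?_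
    rw [interior_Icc] at hs
    exact ⟨hs₁.trans hs.1, sub_neg.1 <| hψ.neg_of_zeros_of_mem_Ioo (mem_univ s₁) (mem_univ s₂)
      hψ₁ hψ₂ hs⟩
  have anti₃ : StrictAntiOn (catenoidArea r h) (Ici s₂) := by
    refine strictAntiOn_catenoidArea hr hh (convex_Ici s₂) fun s hs => ?_
    rw [interior_Ici] at hs
    exact ⟨(hs₁.trans hs₁₂).trans hs, sub_pos.1 <| hψ.pos_of_zeros_of_right_lt (mem_univ s₁)
      (mem_univ s) hψ₁ hψ₂ hs₁₂ hs⟩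
  refine ⟨anti₁, mono₂, anti₃, ?_, ?_⟩
  · exact (isLocalMin_of_anti_mono hs₁ hs₁₂ (anti₁.antitoneOn.mono Ioc_subset_Icc_self)
      (mono₂.monotoneOn.mono Ico_subset_Icc_self)).on _
  · exact (isLocalMax_of_mono_anti hs₁₂ (lt_add_one s₂) (mono₂.monotoneOn.mono Ioc_subset_Icc_self)
      (anti₃.antitoneOn.mono Ico_subset_Ici_self)).on _

/-- **Monotonicity of the area along the family of catenoidal slices.**
Let `r, h > 0`, let `A(s)` be the area of the catenoidal slice `C_s^{r,h}`, and let
`0 < s₁ < s₂` be the two positive solutions of `r s = cosh (s h)`. Then `A` is strictly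
decreasing on `[0, s₁]`, strictly increasing on `[s₁, s₂]` and strictly decreasing on
`[s₂, ∞)`; in particular `A` has a local minimum at `s₁` (the stable catenoid) and a local
maximum at `s₂` (the unstable catenoid). -/
theorem area_monotonicity_catenoid_family
    (r h : ℝ) (hr : 0 < r) (hh : 0 < h)
    (A : ℝ → ℝ)
    (hA : ∀ s : ℝ, A s = 4 * Real.pi * ∫ z in (0:ℝ)..h,
        (r * Real.cosh (s * z) / Real.cosh (s * h)) *
          Real.sqrt (1 + (r * s * Real.sinh (s * z) / Real.cosh (s * h)) ^ 2))
    (s₁ s₂ : ℝ) (hs₁ : 0 < s₁) (hs₁₂ : s₁ < s₂)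
    (heq₁ : r * s₁ = Real.cosh (s₁ * h)) (heq₂ : r * s₂ = Real.cosh (s₂ * h))
    (honly : ∀ s : ℝ, 0 < s → r * s = Real.cosh (s * h) → s = s₁ ∨ s = s₂) :
    StrictAntiOn A (Set.Icc 0 s₁) ∧ StrictMonoOn A (Set.Icc s₁ s₂) ∧
      StrictAntiOn A (Set.Ici s₂) ∧
      IsLocalMinOn A (Set.Ici 0) s₁ ∧ IsLocalMaxOn A (Set.Ici 0) s₂ :=
  area_monotonicity_catenoid_family_general r h hr hh A hA s₁ s₂ hs₁ hs₁₂ heq₁ heq₂
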